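/- With the hypotheses of the corrected theorem (∑ m*ᵢ = m*_o, ∑ m*ᵢ rᵢ = 0, J*_o = ∑ᵢ J*ᵢ + ∑ᵢ S(rᵢ) m*ᵢ S(rᵢ)ᵀ invertible), for any resultant wrench h_o = (f_o, t_o), the wrenches h_{m,i} = ((m*ᵢ/m*_o) f_o + m*ᵢ S(rᵢ)ᵀ (J*_o)⁻¹ t_o, J*ᵢ (J*_o)⁻¹ t_o) satisfy ∑ᵢ f_{m,i} = f_o and ∑ᵢ (t_{m,i} + rᵢ × f_{m,i}) = t_o. -/
import Mathlib


open Matrix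

/-- Skew-symmetric cross-product matrix `S(r)` with `S(r) *ᵥ a = r ×₃ a`. -/
def skew (r : Fin 3 → ℝ) : Matrix (Fin 3) (Fin 3) ℝ :=
  !![0, -r 2, r 1; r 2, 0, -r 0; -r 1, r 0, 0]


lemma skew_smul (a : ℝ) (r : Fin 3 → ℝ) : skew (a • r) = a • skew r := by
  ext i j; fin_cases i <;> fin_cases j <;> simp [skew, vecHead, vecTail] <;> ring

lemma skew_add (r s : Fin 3 → ℝ) : skew (r + s) = skew r + skew s := by
  ext i j; fin_cases i <;> fin_cases j <;> simp [skew, vecHead, vecTail] <;> ring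

lemma skew_zero : skew (0 : Fin 3 → ℝ) = 0 := by
  ext i j; fin_cases i <;> fin_cases j <;> simp [skew, vecHead, vecTail]

lemma skew_sum {n : ℕ} (f : Fin n → Fin 3 → ℝ) :
    skew (∑ i, f i) = ∑ i, skew (f i) := by
  induction (Finset.univ : Finset (Fin n)) using Finset.cons_induction with
  | empty => simp [skew_zero]
  | cons a s ha ih => simp [Finset.sum_insert ha, skew_add, ih]

lemma cross_eq_skew (r x : Fin 3 → ℝ) : crossProduct r x = skew r *ᵥ x := by
  ext i; fin_cases i <;>
    simp [skew, crossProduct, mulVec, dotProduct, Fin.sum_univ_succ] <;> ring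

lemma sum_mulVec' {k : ℕ} (f : Fin k → Matrix (Fin 3) (Fin 3) ℝ) (v : Fin 3 → ℝ) :
    (∑ i, f i) *ᵥ v = ∑ i, f i *ᵥ v := by
  induction (Finset.univ : Finset (Fin k)) using Finset.cons_induction with
  | empty => simp
  | cons a s ha ih => simp [Finset.sum_insert ha, Matrix.add_mulVec, ih]


theorem manipulating_wrenches_generate_resultant
    (n : ℕ) (r : Fin n → Fin 3 → ℝ)
    (m : Fin n → ℝ) (hm : ∀ i, 0 < m i)
    (J : Fin n → Matrix (Fin 3) (Fin 3) ℝ)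
    (mo : ℝ) (hmo : mo = ∑ i, m i)
    (Jo : Matrix (Fin 3) (Fin 3) ℝ)
    (hJo : Jo = (∑ i, J i) + ∑ i, skew (r i) * (m i • (skew (r i))ᵀ))
    (hJoinv : IsUnit Jo.det)
    (hcom : (∑ i, m i • r i) = 0)
    (fo tq : Fin 3 → ℝ)
    (fm tm : Fin n → Fin 3 → ℝ)
    (hfm : ∀ i, fm i = (m i / mo) • fo + m i • ((skew (r i))ᵀ.mulVec (Jo⁻¹.mulVec tq)))
    (htm : ∀ i, tm i = (J i * Jo⁻¹).mulVec tq) :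
    (∑ i, fm i) = fo ∧ (∑ i, (tm i + crossProduct (r i) (fm i))) = tq := by
  -- n must be positive, else Jo = 0 contradicts invertibility
  have hn : 0 < n := by
    rcases Nat.eq_zero_or_pos n with h | h
    · subst h
      simp only [Finset.univ_eq_empty, Finset.sum_empty, add_zero] at hJo
      rw [hJo] at hJoinv
      simp at hJoinv
    · exact h
  have hne : (Finset.univ : Finset (Fin n)).Nonempty := by
    simpa [Finset.univ_nonempty_iff] using Fin.pos_iff_nonempty.mp hn
  have hmo0 : 0 < mo := hmo ▸ Finset.sum_pos (fun i _ => hm i) hne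
  set v : Fin 3 → ℝ := Jo⁻¹ *ᵥ tq with hv
  -- key: ∑ m i • skew (r i) = 0
  have hkey : (∑ i, m i • skew (r i)) = 0 := by
    have : (∑ i, skew (m i • r i)) = skew (∑ i, m i • r i) := (skew_sum _).symm
    rw [hcom, skew_zero] at this
    simpa [skew_smul] using this
  have hkeyT : (∑ i, m i • (skew (r i))ᵀ) = 0 := by
    have := congrArg Matrix.transpose hkey
    simpa [Matrix.transpose_sum, Matrix.transpose_smul] using this
  constructor
  · calc (∑ i, fm i)
        = (∑ i, (m i / mo)) • fo + (∑ i, m i • (skew (r i))ᵀ) *ᵥ v := by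
          simp only [hfm, Finset.sum_add_distrib, Finset.sum_smul,
            sum_mulVec', Matrix.smul_mulVec]
      _ = fo := by
          rw [hkeyT]
          have : (∑ i, m i / mo) = 1 := by
            rw [← Finset.sum_div, ← hmo, div_self hmo0.ne']
          simp [this]
  · have hcross : ∀ i, crossProduct (r i) (fm i)
        = (1 / mo) • (skew (m i • r i) *ᵥ fo)
          + (skew (r i) * (m i • (skew (r i))ᵀ)) *ᵥ v := by
      intro i
      rw [hfm i, cross_eq_skew]
      rw [Matrix.mulVec_add]
      congr 1
      · rw [Matrix.mulVec_smul, skew_smul, Matrix.smul_mulVec, smul_smul]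
        congr 1
        field_simp
      · simp [Matrix.mulVec_smul, Matrix.smul_mulVec, ← Matrix.mulVec_mulVec]
    calc (∑ i, (tm i + crossProduct (r i) (fm i)))
        = (1 / mo) • ((∑ i, skew (m i • r i)) *ᵥ fo)
          + ((∑ i, J i) + ∑ i, skew (r i) * (m i • (skew (r i))ᵀ)) *ᵥ v := by
          simp only [htm, hcross, Finset.sum_add_distrib, sum_mulVec',
            Matrix.add_mulVec, Finset.smul_sum, ← Matrix.mulVec_mulVec]
          abel
      _ = tq := by
          rw [← skew_sum, hcom, skew_zero, ← hJo, hv, Matrix.mulVec_mulVec,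
            Matrix.mul_nonsing_inv Jo hJoinv]
          simp
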